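/- Suppose 2J ≤ K. Let (ν, q) and (ν', q') be two J-class latent class model parameter sets: ν_j, ν'_j ≥ 0 with ∑_{j=1}^J ν_j = ∑_{j=1}^J ν'_j = 1, q_{jk}, q'_{jk} ∈ (0,1), and for each fixed k the values q_{1k},...,q_{Jk} are pairwise distinct and the values q'_{1k},...,q'_{Jk} are pairwise distinct. Define the induced cell probabilities π_h = ∑_{j=1}^J ν_j ∏_{k=1}^K q_{jk}^{h_k}(1-q_{jk})^{1-h_k} and π'_h analogously, for h ∈ H. If π_h/(1-π_0) = π'_h/(1-π'_0) for all h ∈ H*, then π_0 = π'_0. -/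

import Mathlib

open Finset

/-!
Consider the generating function
`G(t) = ∑_h π_h ∏_k t_k^{h_k} = ∑_j ν_j ∏_k (q_{jk} t_k + 1 - q_{jk})`.
Clearing denominators, the hypothesis says that `(1 - π'_0) π_h - (1 - π_0) π'_h` vanishes for
`h ≠ 0`, so `(1 - π'_0) G - (1 - π_0) G'` is the constant `(1 - π'_0) π_0 - (1 - π_0) π'_0`.
Since `2J ≤ K`, every class of both models can be given its own coordinate `k`, and setting
`t_k = 1 - 1/q_{jk}` there kills the factor `q_{jk} t_k + 1 - q_{jk}`; at this point `G` and `G'`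
both vanish, so the constant is `0`, which forces `π_0 = π'_0`.
-/

namespace LatentClass

variable {ι κ : Type*} [Fintype ι] [Fintype κ]

def cellProb (ν : ι → ℝ) (q : ι → κ → ℝ) (h : κ → Bool) : ℝ :=
  ∑ j, ν j * ∏ k, q j k ^ (h k).toNat * (1 - q j k) ^ (1 - (h k).toNat)

def genFun (ν : ι → ℝ) (q : ι → κ → ℝ) (t : κ → ℝ) : ℝ :=
  ∑ j, ν j * ∏ k, (q j k * t k + (1 - q j k))

theorem cellProb_false (ν : ι → ℝ) (q : ι → κ → ℝ) :
    cellProb ν q (fun _ => false) = ∑ j, ν j * ∏ k, (1 - q j k) := by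
  simp [cellProb]

theorem genFun_eq_sum_cellProb [DecidableEq κ] (ν : ι → ℝ) (q : ι → κ → ℝ) (t : κ → ℝ) :
    genFun ν q t = ∑ h : κ → Bool, cellProb ν q h * ∏ k, t k ^ (h k).toNat := by
  have factor (j : ι) (k : κ) : q j k * t k + (1 - q j k) =
      ∑ b : Bool, q j k ^ b.toNat * (1 - q j k) ^ (1 - b.toNat) * t k ^ b.toNat := by
    simp
  simp only [genFun, cellProb, factor, Fintype.prod_sum, prod_mul_distrib, mul_sum, sum_mul]
  rw [sum_comm]
  simp only [mul_assoc]

theorem sum_mul_prod_one_sub_lt_one [Nonempty κ] {ν : ι → ℝ} {q : ι → κ → ℝ}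
    (hν : ∀ j, 0 ≤ ν j) (hνs : ∑ j, ν j = 1) (hq : ∀ j k, q j k ∈ Set.Ioo (0 : ℝ) 1) :
    ∑ j, ν j * ∏ k, (1 - q j k) < 1 := by
  obtain ⟨j₀, hj₀⟩ : ∃ j, 0 < ν j := by
    by_contra! h
    linarith [sum_nonpos fun j (_ : j ∈ univ) => h j]
  have hprod_lt_one (j : ι) : ∏ k, (1 - q j k) < 1 := by
    obtain ⟨k₀⟩ := ‹Nonempty κ›
    calc ∏ k, (1 - q j k) ≤ ∏ k ∈ {k₀}, (1 - q j k) :=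
          prod_le_prod_of_subset_of_le_one (subset_univ _)
            (fun k _ => by linarith [(hq j k).2]) (fun k _ _ => by linarith [(hq j k).1])
      _ < 1 := by simpa using (hq j k₀).1
  calc ∑ j, ν j * ∏ k, (1 - q j k) < ∑ j, ν j := by
        refine sum_lt_sum (fun j _ => ?_) ⟨j₀, mem_univ _, ?_⟩
        · exact mul_le_of_le_one_right (hν j) (hprod_lt_one j).le
        · exact mul_lt_of_lt_one_right hj₀ (hprod_lt_one j₀)
    _ = 1 := hνs

theorem linear_factor_eq_zero {p : ℝ} (hp : p ≠ 0) : p * (1 - 1 / p) + (1 - p) = 0 := by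
  field_simp
  ring

theorem exists_genFun_eq_zero {ι' : Type*} [Fintype ι'] (e : ι ⊕ ι' ↪ κ) {q : ι → κ → ℝ}
    {q' : ι' → κ → ℝ} (hq : ∀ j k, q j k ≠ 0) (hq' : ∀ j k, q' j k ≠ 0) :
    ∃ t : κ → ℝ, (∀ ν, genFun ν q t = 0) ∧ ∀ ν', genFun ν' q' t = 0 := by
  let root : ι ⊕ ι' → ℝ :=
    Sum.elim (fun j => 1 - 1 / q j (e (.inl j))) (fun j => 1 - 1 / q' j (e (.inr j)))
  let t : κ → ℝ := Function.extend e root 1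
  have ht (x : ι ⊕ ι') : t (e x) = root x := e.injective.extend_apply root 1 x
  refine ⟨t, fun ν => sum_eq_zero fun j _ => ?_, fun ν' => sum_eq_zero fun j _ => ?_⟩
  · rw [prod_eq_zero (mem_univ (e (.inl j))) (by rw [ht]; exact linear_factor_eq_zero (hq _ _)),
      mul_zero]
  · rw [prod_eq_zero (mem_univ (e (.inr j))) (by rw [ht]; exact linear_factor_eq_zero (hq' _ _)),
      mul_zero]

theorem mul_cellProb_false_eq {ι' : Type*} [Fintype ι'] {ν : ι → ℝ} {q : ι → κ → ℝ}
    {ν' : ι' → ℝ} {q' : ι' → κ → ℝ} {a b : ℝ} {t : κ → ℝ}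
    (hcell : ∀ h : κ → Bool, h ≠ (fun _ => false) → a * cellProb ν q h = b * cellProb ν' q' h)
    (ht : genFun ν q t = 0) (ht' : genFun ν' q' t = 0) :
    a * cellProb ν q (fun _ => false) = b * cellProb ν' q' (fun _ => false) := by
  classical
  have hdiff : a * genFun ν q t - b * genFun ν' q' t =
      ∑ h : κ → Bool, (a * cellProb ν q h - b * cellProb ν' q' h) * ∏ k, t k ^ (h k).toNat := by
    simp only [genFun_eq_sum_cellProb, mul_sum, sub_mul, sum_sub_distrib, mul_assoc]
  rw [sum_eq_single (fun _ => false) (fun h _ hh => by rw [hcell h hh, sub_self, zero_mul])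
    (fun h => absurd (mem_univ _) h), ht, ht'] at hdiff
  simp only [Bool.toNat_false, pow_zero, prod_const_one, mul_one, mul_zero, sub_zero] at hdiff
  linear_combination -hdiff

end LatentClass

open LatentClass in
theorem stmt3_general (K J : ℕ) (hK : 2 ≤ K) (hJK : 2 * J ≤ K)
    (ν ν' : Fin J → ℝ) (q q' : Fin J → Fin K → ℝ)
    (hν : ∀ j, 0 ≤ ν j) (hν' : ∀ j, 0 ≤ ν' j)
    (hνs : ∑ j, ν j = 1) (hν's : ∑ j, ν' j = 1)
    (hq : ∀ j k, q j k ∈ Set.Ioo (0 : ℝ) 1) (hq' : ∀ j k, q' j k ∈ Set.Ioo (0 : ℝ) 1)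
    (hobs : ∀ h : Fin K → Bool, h ≠ (fun _ => false) →
        (∑ j, ν j * ∏ k, q j k ^ (h k).toNat * (1 - q j k) ^ (1 - (h k).toNat)) /
            (1 - ∑ j, ν j * ∏ k, (1 - q j k)) =
          (∑ j, ν' j * ∏ k, q' j k ^ (h k).toNat * (1 - q' j k) ^ (1 - (h k).toNat)) /
            (1 - ∑ j, ν' j * ∏ k, (1 - q' j k))) :
    (∑ j, ν j * ∏ k, (1 - q j k)) = ∑ j, ν' j * ∏ k, (1 - q' j k) := by
  have : Nonempty (Fin K) := ⟨⟨0, by omega⟩⟩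
  have hπ₀ := sum_mul_prod_one_sub_lt_one hν hνs hq
  have hπ₀' := sum_mul_prod_one_sub_lt_one hν' hν's hq'
  obtain ⟨e⟩ : Nonempty (Fin J ⊕ Fin J ↪ Fin K) :=
    Function.Embedding.nonempty_of_card_le (by simpa [two_mul] using hJK)
  obtain ⟨t, ht, ht'⟩ :=
    exists_genFun_eq_zero e (fun j k => (hq j k).1.ne') (fun j k => (hq' j k).1.ne')
  have hcell (h : Fin K → Bool) (hh : h ≠ fun _ => false) :
      (1 - ∑ j, ν' j * ∏ k, (1 - q' j k)) * cellProb ν q h =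
        (1 - ∑ j, ν j * ∏ k, (1 - q j k)) * cellProb ν' q' h := by
    have := hobs h hh
    unfold cellProb
    rw [div_eq_div_iff (by linarith) (by linarith)] at this
    linear_combination this
  have hπ := mul_cellProb_false_eq hcell (ht ν) (ht' ν')
  rw [cellProb_false, cellProb_false] at hπ
  linear_combination hπ

/-- If `2J ≤ K`, then the `J`-class latent class model is conditionally
identifiable: for two parameter sets `(ν, q)` and `(ν', q')` (class probabilities
nonnegative summing to one, sampling probabilities in `(0,1)`, pairwise distinct across
classes for each list), if the induced observed cell probabilities coincide on `H*`,
then the induced unobserved cell probabilities `π_0` coincide. -/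
theorem stmt3 (K J : ℕ) (hK : 2 ≤ K) (hJ : 1 ≤ J) (hJK : 2 * J ≤ K)
    (ν ν' : Fin J → ℝ) (q q' : Fin J → Fin K → ℝ)
    (hν : ∀ j, 0 ≤ ν j) (hν' : ∀ j, 0 ≤ ν' j)
    (hνs : ∑ j, ν j = 1) (hν's : ∑ j, ν' j = 1)
    (hq : ∀ j k, q j k ∈ Set.Ioo (0 : ℝ) 1) (hq' : ∀ j k, q' j k ∈ Set.Ioo (0 : ℝ) 1)
    (hd : ∀ k, ∀ j j' : Fin J, j ≠ j' → q j k ≠ q j' k)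
    (hd' : ∀ k, ∀ j j' : Fin J, j ≠ j' → q' j k ≠ q' j' k)
    (hobs : ∀ h : Fin K → Bool, h ≠ (fun _ => false) →
        (∑ j, ν j * ∏ k, q j k ^ (h k).toNat * (1 - q j k) ^ (1 - (h k).toNat)) /
            (1 - ∑ j, ν j * ∏ k, (1 - q j k)) =
          (∑ j, ν' j * ∏ k, q' j k ^ (h k).toNat * (1 - q' j k) ^ (1 - (h k).toNat)) /
            (1 - ∑ j, ν' j * ∏ k, (1 - q' j k))) :
    (∑ j, ν j * ∏ k, (1 - q j k)) = ∑ j, ν' j * ∏ k, (1 - q' j k) :=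
  stmt3_general K J hK hJK ν ν' q q' hν hν' hνs hν's hq hq' hobs
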